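/- For every integer r ≥ 1, the right-down diagonal sequence d_n^{(r)} = F_{n−r+2} · S(n, n−r+1) of the Fibonacci-Fubini triangle satisfies the linear recurrence with characteristic polynomial (x² − x − 1)^{2r−1}; that is, writing (x² − x − 1)^{2r−1} = Σ_{j=0}^{4r−2} c_{4r−2−j} x^{4r−2−j}, one has Σ_{j=0}^{4r−2} c_{4r−2−j} · d_{n−j}^{(r)} = 0 for all integers n ≥ 5r − 2. -/

import Mathlib

/-- Stirling numbers of the second kind. -/
def stirling2 : ℕ → ℕ → ℕ
  | 0, 0 => 1
  | 0, _ + 1 => 0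
  | _ + 1, 0 => 0
  | n + 1, k + 1 => stirling2 n k + (k + 1) * stirling2 n (k + 1)

/-- The `r`-th right-down diagonal of the Fibonacci-Fubini triangle:
`d_n^{(r)} = F_{n-r+2} · S(n, n-r+1)`. -/
def fibFubiniD (r n : ℕ) : ℕ := Nat.fib (n - r + 2) * stirling2 n (n - r + 1)

/-
Write `E` for the shift `f ↦ f (· + 1)` on sequences. If `p(E) u = 0` and `(E - 1)^m g = 0`,
then `p(E)^m (u g) = 0`: in `p(E)(u g) = (p(E) u) g + ∑ pᵢ (Eⁱ u) ((Eⁱ - 1) g)` every `Eⁱ - 1`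
is a multiple of `E - 1`, so one factor `p(E)` is traded for one factor `E - 1` acting on `g`.
With `r = t + 1`, the diagonal is `d_{s+r} = F_{s+2} · S(s+t+1, s+1)`. Here `F_{s+2}` is killed
by `E² - E - 1`, and since `(E - 1) S(s+t+1, s+1) = (s+2) S(s+t+2, s+2)` while multiplying by a
linear polynomial in `s` costs one more factor `E - 1`, the Stirling factor is killed by
`(E - 1)^{2t+1}`.
-/

open Polynomial

theorem stirling2_eq_stirlingSecond : stirling2 = Nat.stirlingSecond := by
  funext n k
  induction n generalizing k with
  | zero => cases k <;> rfl
  | succ n ih =>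
    cases k with
    | zero => rfl
    | succ k => rw [stirling2, Nat.stirlingSecond_succ_succ, ih, ih, add_comm]

namespace Sequence

variable {R : Type*} [CommRing R]

def shift : Module.End R (ℕ → R) where
  toFun f s := f (s + 1)
  map_add' _ _ := rfl
  map_smul' _ _ := rfl

@[simp]
theorem shift_apply (f : ℕ → R) (s : ℕ) : shift f s = f (s + 1) := rfl

@[simp]
theorem shift_pow_apply (k : ℕ) (f : ℕ → R) (s : ℕ) : (shift ^ k) f s = f (s + k) := by
  induction k generalizing f with
  | zero => rfl
  | succ k ih => rw [pow_succ, Module.End.mul_apply, ih]; rfl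

theorem aeval_shift_apply_of_natDegree_lt {p : R[X]} {N : ℕ} (hp : p.natDegree < N)
    (f : ℕ → R) (s : ℕ) :
    aeval shift p f s = ∑ i ∈ Finset.range N, p.coeff i * f (s + i) := by
  simp [aeval_eq_sum_range' hp, Finset.sum_apply]

theorem aeval_shift_aeval_shift (p q : R[X]) (f : ℕ → R) :
    aeval shift p (aeval shift q f) = aeval shift (p * q) f := by
  rw [map_mul, Module.End.mul_apply]

theorem aeval_shift_eq_zero_of_dvd {p q : R[X]} (hpq : p ∣ q) {f : ℕ → R}
    (hf : aeval shift p f = 0) : aeval shift q f = 0 := by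
  obtain ⟨r, rfl⟩ := hpq
  rw [mul_comm, map_mul, Module.End.mul_apply, hf, map_zero]

theorem aeval_shift_shift_pow_eq_zero {p : R[X]} {f : ℕ → R} (hf : aeval shift p f = 0)
    (i : ℕ) : aeval shift p ((shift ^ i) f) = 0 := by
  rw [← aeval_X_pow (R := R), aeval_shift_aeval_shift, mul_comm, ← aeval_shift_aeval_shift, hf,
    map_zero]

theorem aeval_shift_X_pow_sub_one_apply (k : ℕ) (f : ℕ → R) (s : ℕ) :
    aeval shift (X ^ k - 1 : R[X]) f s = f (s + k) - f s := by
  simp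

theorem aeval_shift_X_sub_one_apply (f : ℕ → R) (s : ℕ) :
    aeval shift (X - 1 : R[X]) f s = f (s + 1) - f s := by
  simp

theorem aeval_shift_pow_succ (p : R[X]) (m : ℕ) (f : ℕ → R) :
    aeval shift (p ^ (m + 1)) f = aeval shift (p ^ m) (aeval shift p f) := by
  rw [pow_succ, map_mul, Module.End.mul_apply]

theorem aeval_shift_mul (p : R[X]) (u g : ℕ → R) :
    aeval shift p (u * g) = aeval shift p u * g +
      ∑ i ∈ Finset.range (p.natDegree + 1),
        p.coeff i • ((shift ^ i) u * aeval shift (X ^ i - 1 : R[X]) g) := by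
  funext s
  simp only [Pi.add_apply, Pi.mul_apply, Finset.sum_apply, Pi.smul_apply, smul_eq_mul,
    shift_pow_apply, aeval_shift_X_pow_sub_one_apply]
  simp only [aeval_shift_apply_of_natDegree_lt (Nat.lt_succ_self _), Finset.sum_mul,
    ← Finset.sum_add_distrib]
  exact Finset.sum_congr rfl fun i _ => by rw [Pi.mul_apply]; ring

theorem aeval_shift_pow_mul_eq_zero {p : R[X]} {m : ℕ} {u g : ℕ → R}
    (hu : aeval shift p u = 0) (hg : aeval shift ((X - 1 : R[X]) ^ m) g = 0) :
    aeval shift (p ^ m) (u * g) = 0 := by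
  induction m generalizing u g with
  | zero => simp_all
  | succ m ih =>
    have hdiff (i : ℕ) :
        aeval shift ((X - 1 : R[X]) ^ m) (aeval shift (X ^ i - 1 : R[X]) g) = 0 := by
      rw [aeval_shift_aeval_shift]
      refine aeval_shift_eq_zero_of_dvd ?_ hg
      rw [pow_succ]
      exact mul_dvd_mul_left _ (sub_one_dvd_pow_sub_one X i)
    rw [aeval_shift_pow_succ, aeval_shift_mul, hu, zero_mul, zero_add, map_sum]
    refine Finset.sum_eq_zero fun i _ => ?_
    rw [map_smul, ih (aeval_shift_shift_pow_eq_zero hu i) (hdiff i), smul_zero]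

theorem aeval_shift_X_sub_one_mul_linear (c : R) (f : ℕ → R) :
    aeval shift (X - 1 : R[X]) (fun s => (s + c) * f s) =
      (fun s => (s + c) * aeval shift (X - 1 : R[X]) f s) + shift f := by
  funext s
  simp only [Pi.add_apply, aeval_shift_X_sub_one_apply]
  push_cast
  rw [shift_apply]
  ring

theorem aeval_shift_X_sub_one_pow_mul_linear_eq_zero {m : ℕ} (c : R) {f : ℕ → R}
    (hf : aeval shift ((X - 1 : R[X]) ^ m) f = 0) :
    aeval shift ((X - 1 : R[X]) ^ (m + 1)) (fun s => (s + c) * f s) = 0 := by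
  induction m generalizing f with
  | zero => simp_all; ext; simp
  | succ m ih =>
    have hdiff : aeval shift ((X - 1 : R[X]) ^ m) (aeval shift (X - 1 : R[X]) f) = 0 := by
      rwa [← aeval_shift_pow_succ]
    have hshift : aeval shift ((X - 1 : R[X]) ^ (m + 1)) (shift f) = 0 := by
      simpa using aeval_shift_shift_pow_eq_zero hf 1
    rw [aeval_shift_pow_succ, aeval_shift_X_sub_one_mul_linear, map_add, ih hdiff, hshift,
      add_zero]

end Sequence

open Sequence

theorem aeval_shift_fib_eq_zero {R : Type*} [CommRing R] (k : ℕ) :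
    aeval shift (X ^ 2 - X - C 1 : R[X]) (fun s => (Nat.fib (s + k) : R)) = 0 := by
  ext s
  simp [show s + 2 + k = s + k + 2 by ring, show s + 1 + k = s + k + 1 by ring, Nat.fib_add_two]

theorem aeval_shift_stirling2_eq_zero {R : Type*} [CommRing R] (t : ℕ) :
    aeval shift ((X - 1 : R[X]) ^ (2 * t + 1)) (fun s => (stirling2 (s + t + 1) (s + 1) : R)) =
      0 := by
  induction t with
  | zero => ext s; simp [stirling2_eq_stirlingSecond, Nat.stirlingSecond_self]
  | succ t ih =>
    have hrec : aeval shift (X - 1 : R[X]) (fun s => (stirling2 (s + (t + 1) + 1) (s + 1) : R)) =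
        fun s => (s + 2) * shift (fun s => (stirling2 (s + t + 1) (s + 1) : R)) s := by
      funext s
      rw [aeval_shift_X_sub_one_apply, shift_apply,
        show s + 1 + (t + 1) + 1 = s + t + 2 + 1 by ring,
        show s + (t + 1) + 1 = s + t + 2 by ring, show s + 1 + t + 1 = s + t + 2 by ring, stirling2]
      push_cast
      ring
    rw [show 2 * (t + 1) + 1 = 2 * t + 2 + 1 by ring, aeval_shift_pow_succ, hrec]
    exact aeval_shift_X_sub_one_pow_mul_linear_eq_zero 2
      (by simpa using aeval_shift_shift_pow_eq_zero ih 1)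

theorem natDegree_X_sq_sub_X_sub_one_pow_lt {R : Type*} [CommRing R] (t : ℕ) :
    ((X ^ 2 - X - C 1 : R[X]) ^ (2 * t + 1)).natDegree < 4 * t + 3 := by
  have hQ : (X ^ 2 - X - C 1 : R[X]).natDegree ≤ 2 := by compute_degree
  calc _ ≤ (2 * t + 1) * (X ^ 2 - X - C 1 : R[X]).natDegree := natDegree_pow_le
    _ ≤ (2 * t + 1) * 2 := Nat.mul_le_mul_left _ hQ
    _ < 4 * t + 3 := by omega

theorem fibFubiniD_add (t s : ℕ) :
    fibFubiniD (t + 1) (s + (t + 1)) = Nat.fib (s + 2) * stirling2 (s + t + 1) (s + 1) := by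
  rw [fibFubiniD, Nat.add_sub_cancel, ← Nat.add_assoc]

open Finset Polynomial in
/-- The `r`-th right-down diagonal of the Fibonacci-Fubini triangle satisfies the linear
recurrence whose characteristic polynomial is `(x² - x - 1)^{2r-1}`. -/
theorem fibFubiniD_charPoly (r : ℕ) (hr : 1 ≤ r) (n : ℕ) (hn : 5 * r - 2 ≤ n) :
    ∑ j ∈ range (4 * r - 1),
        ((Polynomial.X ^ 2 - Polynomial.X - Polynomial.C 1 : Polynomial ℤ) ^ (2 * r - 1)).coeff
            (4 * r - 2 - j) *
          (fibFubiniD r (n - j) : ℤ) = 0 := by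
  obtain ⟨t, rfl⟩ : ∃ t, r = t + 1 := ⟨r - 1, by omega⟩
  have hann := aeval_shift_pow_mul_eq_zero (aeval_shift_fib_eq_zero (R := ℤ) 2)
    (aeval_shift_stirling2_eq_zero t)
  have hrec := congrFun hann (n - (5 * t + 3))
  rw [aeval_shift_apply_of_natDegree_lt (natDegree_X_sq_sub_X_sub_one_pow_lt t),
    Pi.zero_apply] at hrec
  rw [show 4 * (t + 1) - 1 = 4 * t + 3 by omega, show 2 * (t + 1) - 1 = 2 * t + 1 by omega,
    ← sum_range_reflect]
  refine (sum_congr rfl fun j hj => ?_).trans hrec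
  have hj := mem_range.mp hj
  rw [show 4 * (t + 1) - 2 - (4 * t + 3 - 1 - j) = j by omega,
    show n - (4 * t + 3 - 1 - j) = n - (5 * t + 3) + j + (t + 1) by omega, fibFubiniD_add]
  push_cast
  rfl
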